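/- Let R : ℝ → ℝ be differentiable with L-Lipschitz derivative, where L > 0, let τ ∈ ℝ with R'(τ) ≠ 0, and let p > 1/2. Let δ be a random variable taking values in {−1, +1} such that P(δ = sign(R'(τ))) = p. Then for every step size α with 0 < α ≤ 2(2p − 1)·|R'(τ)| / L, the expected improvement is nonnegative: E[R(τ + α·δ) − R(τ)] ≥ 0. -/

import Mathlib

open MeasureTheory

lemma taylor_lower (R R' : ℝ → ℝ) (L : ℝ) (hL : 0 ≤ L)
    (hderiv : ∀ x, HasDerivAt R (R' x) x)
    (hlip : ∀ x y, |R' x - R' y| ≤ L * |x - y|)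
    (x y : ℝ) :
    R x + R' x * (y - x) - L / 2 * (y - x) ^ 2 ≤ R y := by
  set d := y - x with hd
  set g : ℝ → ℝ := fun t => R (x + t * d) - t * (R' x * d) + L / 2 * t ^ 2 * d ^ 2 with hg
  have hgd : ∀ t : ℝ, HasDerivAt g (R' (x + t * d) * d - R' x * d + L * t * d ^ 2) t := by
    intro t
    have h1 : HasDerivAt (fun t : ℝ => x + t * d) d t := by
      simpa using ((hasDerivAt_id t).mul_const d).const_add x
    have h2 : HasDerivAt (fun t : ℝ => R (x + t * d)) (R' (x + t * d) * d) t :=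
      (hderiv (x + t * d)).comp t h1
    have h3 : HasDerivAt (fun t : ℝ => t * (R' x * d)) (R' x * d) t := by
      simpa using (hasDerivAt_id t).mul_const (R' x * d)
    have h4 : HasDerivAt (fun t : ℝ => L / 2 * t ^ 2 * d ^ 2) (L * t * d ^ 2) t := by
      have := ((hasDerivAt_pow 2 t).const_mul (L / 2)).mul_const (d ^ 2)
      refine this.congr_deriv ?_
      ring
    exact (h2.sub h3).add h4
  have hmono : MonotoneOn g (Set.Icc 0 1) := by
    apply monotoneOn_of_deriv_nonneg (convex_Icc 0 1)
    · exact (fun t _ => ((hgd t).differentiableAt.continuousAt.continuousWithinAt))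
    · intro t ht
      exact ((hgd t).differentiableAt).differentiableWithinAt
    · intro t ht
      rw [interior_Icc] at ht
      rw [(hgd t).deriv]
      have hA := hlip (x + t * d) x
      have hA' : |R' (x + t * d) - R' x| ≤ L * (t * |d|) := by
        have : |x + t * d - x| = t * |d| := by
          rw [add_sub_cancel_left, abs_mul, abs_of_pos ht.1]
        rw [this] at hA
        exact hA
      have hdd : |d| * |d| = d ^ 2 := by rw [← sq_abs]; ring
      have h1 : -(|R' (x + t * d) - R' x| * |d|) ≤ (R' (x + t * d) - R' x) * d := by
        rw [← abs_mul]; exact neg_abs_le _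
      have h2 : |R' (x + t * d) - R' x| * |d| ≤ L * (t * |d|) * |d| :=
        mul_le_mul_of_nonneg_right hA' (abs_nonneg d)
      have h3 : L * (t * |d|) * |d| = L * t * d ^ 2 := by
        rw [mul_assoc, mul_assoc, mul_assoc, hdd]
      nlinarith [h1, h2, h3]
  have h01 := hmono (Set.left_mem_Icc.2 zero_le_one) (Set.right_mem_Icc.2 zero_le_one) zero_le_one
  simp only [hg] at h01
  have hxy : x + 1 * d = y := by rw [hd]; ring
  rw [hxy] at h01
  norm_num at h01
  nlinarith [h01]

/-- for small enough step sizes, the expected one-step improvement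
is nonnegative when the step sign is correct with probability `p > 1/2`. -/
theorem expected_improvement_nonneg
    {Ω : Type*} [MeasureSpace Ω] [IsProbabilityMeasure (volume : Measure Ω)]
    (R R' : ℝ → ℝ) (L : ℝ) (hL : 0 < L)
    (hderiv : ∀ x, HasDerivAt R (R' x) x)
    (hlip : ∀ x y, |R' x - R' y| ≤ L * |x - y|)
    (τ : ℝ) (hτ : R' τ ≠ 0) (p : ℝ) (hp2 : 1 / 2 < p)
    (δ : Ω → ℝ) (hδmeas : Measurable δ)
    (hδval : ∀ ω, δ ω = -1 ∨ δ ω = 1)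
    (hp : (volume {ω | δ ω = Real.sign (R' τ)}).toReal = p) :
    ∀ α : ℝ, 0 < α → α ≤ 2 * (2 * p - 1) * |R' τ| / L →
      0 ≤ ∫ ω, (R (τ + α * δ ω) - R τ) := by
  intro α hα hαle
  set a : ℝ := R (τ + α) - R τ with ha
  set b : ℝ := R (τ - α) - R τ with hb
  set s : Set Ω := δ ⁻¹' {1} with hs
  have hsm : MeasurableSet s := hδmeas (measurableSet_singleton 1)
  -- rewrite the integrand as a sum of indicators
  have hf : (fun ω => R (τ + α * δ ω) - R τ)
      = fun ω => s.indicator (fun _ => a) ω + sᶜ.indicator (fun _ => b) ω := by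
    funext ω
    rcases hδval ω with h | h
    · have hωs : ω ∉ s := by norm_num [hs, h]
      rw [Set.indicator_of_notMem hωs, Set.indicator_of_mem (Set.mem_compl hωs), h, hb]
      norm_num [sub_eq_add_neg]
    · have hωs : ω ∈ s := by simp [hs, h]
      simp [Set.indicator_of_mem hωs, Set.indicator_of_notMem (fun hc => hc hωs : ω ∉ sᶜ),
        h, ha]
  rw [hf]
  have hia : Integrable (s.indicator (fun _ => a)) (volume : Measure Ω) :=
    (integrable_const a).indicator hsm
  have hib : Integrable (sᶜ.indicator (fun _ => b)) (volume : Measure Ω) :=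
    (integrable_const b).indicator hsm.compl
  rw [integral_add hia hib, integral_indicator_const _ hsm, integral_indicator_const _ hsm.compl]
  set q : ℝ := (volume s).toReal with hq
  have hq0 : 0 ≤ q := ENNReal.toReal_nonneg
  have hq1 : q ≤ 1 := by
    rw [hq]
    exact ENNReal.toReal_le_of_le_ofReal zero_le_one (by simpa using prob_le_one (μ := (volume : Measure Ω)) (s := s))
  have hqc : (volume sᶜ).toReal = 1 - q := by
    rw [prob_compl_eq_one_sub hsm]
    rw [ENNReal.toReal_sub_of_le prob_le_one ENNReal.one_ne_top]
    simp [hq]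
  rw [measureReal_def, measureReal_def, hqc, ← hq]
  -- Taylor lower bounds
  have hTa : R' τ * α - L / 2 * α ^ 2 ≤ a := by
    have := taylor_lower R R' L hL.le hderiv hlip τ (τ + α)
    simp only [add_sub_cancel_left] at this
    linarith [this]
  have hTb : -(R' τ * α) - L / 2 * α ^ 2 ≤ b := by
    have := taylor_lower R R' L hL.le hderiv hlip τ (τ - α)
    have h2 : τ - α - τ = -α := by ring
    rw [h2] at this
    nlinarith [this]
  have hαL : α * L ≤ 2 * (2 * p - 1) * |R' τ| := (le_div_iff₀ hL).mp hαle
  have key := mul_le_mul_of_nonneg_right hαL hα.le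
  simp only [smul_eq_mul]
  rcases hτ.lt_or_gt with hneg | hpos
  · -- R' τ < 0 : sign = -1, so {δ = sign} = sᶜ
    have hsign : Real.sign (R' τ) = -1 := Real.sign_of_neg hneg
    rw [hsign] at hp
    have hset : {ω | δ ω = (-1 : ℝ)} = sᶜ := by
      ext ω
      simp only [Set.mem_setOf_eq, Set.mem_compl_iff, hs, Set.mem_preimage,
        Set.mem_singleton_iff]
      rcases hδval ω with h | h <;> norm_num [h]
    rw [hset, hqc] at hp
    have habs : |R' τ| = -(R' τ) := abs_of_neg hneg
    rw [habs] at key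
    have hqp : q = 1 - p := by linarith
    have e1 : q * (R' τ * α - L / 2 * α ^ 2) ≤ q * a := mul_le_mul_of_nonneg_left hTa hq0
    have e2 : (1 - q) * (-(R' τ * α) - L / 2 * α ^ 2) ≤ (1 - q) * b :=
      mul_le_mul_of_nonneg_left hTb (by linarith)
    rw [hqp] at e1 e2 ⊢
    nlinarith [e1, e2, key]
  · -- R' τ > 0 : sign = 1, so {δ = sign} = s
    have hsign : Real.sign (R' τ) = 1 := Real.sign_of_pos hpos
    rw [hsign] at hp
    have hset : {ω | δ ω = (1 : ℝ)} = s := by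
      ext ω
      simp [hs]
    rw [hset, ← hq] at hp
    have habs : |R' τ| = R' τ := abs_of_pos hpos
    rw [habs] at key
    have e1 : q * (R' τ * α - L / 2 * α ^ 2) ≤ q * a := mul_le_mul_of_nonneg_left hTa hq0
    have e2 : (1 - q) * (-(R' τ * α) - L / 2 * α ^ 2) ≤ (1 - q) * b :=
      mul_le_mul_of_nonneg_left hTb (by linarith)
    rw [hp] at e1 e2 ⊢
    nlinarith [e1, e2, key]
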